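/- arXiv:1207.5841 — 2 statements merged into one kernel-verified Lean document; each statement's English description precedes it below -/
import Mathlib

section
/- A modal formula is derivable in the system S5 if and only if it is valid on every finite single-cluster frame, that is, on every frame consisting of a finite nonempty set W whose accessibility relation is the universal relation (R w v holds for all worlds w, v). -/
/-- Modal formulas: falsum, propositional variables, implication, Box. -/
inductive ModalFormula : Type
  | falsum : ModalFormula
  | var : ℕ → ModalFormula
  | impl : ModalFormula → ModalFormula → ModalFormula
  | box : ModalFormula → ModalFormula

namespace ModalFormula

/-- Negation: ¬φ := φ → ⊥. -/
def neg (φ : ModalFormula) : ModalFormula := impl φ falsum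

/-- Disjunction: φ ∨ ψ := ¬φ → ψ. -/
def disj (φ ψ : ModalFormula) : ModalFormula := impl (neg φ) ψ

/-- Conjunction: φ ∧ ψ := ¬(φ → ¬ψ). -/
def conj (φ ψ : ModalFormula) : ModalFormula := neg (impl φ (neg ψ))

/-- Diamond: ◇φ := ¬□¬φ. -/
def dia (φ : ModalFormula) : ModalFormula := neg (box (neg φ))

end ModalFormula

/-- A Kripke model: worlds, accessibility relation, valuation. -/
structure KripkeModel where
  W : Type
  R : W → W → Prop
  V : W → ℕ → Prop

/-- Truth of a modal formula at a world of a Kripke model. -/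
def KripkeModel.truth (M : KripkeModel) : M.W → ModalFormula → Prop
  | _, ModalFormula.falsum => False
  | w, ModalFormula.var n => M.V w n
  | w, ModalFormula.impl φ ψ => M.truth w φ → M.truth w ψ
  | w, ModalFormula.box φ => ∀ v, M.R w v → M.truth v φ

/-- A formula is valid on a frame (W, R) if it is true at every world of
every Kripke model with that frame. -/
def ValidOnFrame (W : Type) (R : W → W → Prop) (φ : ModalFormula) : Prop :=
  ∀ V : W → ℕ → Prop, ∀ w : W, KripkeModel.truth ⟨W, R, V⟩ w φ

/-- φ is a substitution instance of a classical propositional tautology: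
it is true under every assignment of truth values to formulas that respects
falsum and implication (variables and boxed formulas may get arbitrary values). -/
def TautInstance (φ : ModalFormula) : Prop :=
  ∀ v : ModalFormula → Prop,
    (¬ v ModalFormula.falsum) →
    (∀ a b : ModalFormula, v (ModalFormula.impl a b) ↔ (v a → v b)) →
    v φ

/-- Derivability from a set of axioms `Ax`: the smallest set of formulas
containing all substitution instances of propositional tautologies and all
formulas in `Ax`, closed under modus ponens and necessitation. -/
inductive Derivable (Ax : ModalFormula → Prop) : ModalFormula → Prop
  | taut (φ : ModalFormula) : TautInstance φ → Derivable Ax φ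
  | ax (φ : ModalFormula) : Ax φ → Derivable Ax φ
  | mp (φ ψ : ModalFormula) :
      Derivable Ax (ModalFormula.impl φ ψ) → Derivable Ax φ → Derivable Ax ψ
  | nec (φ : ModalFormula) : Derivable Ax φ → Derivable Ax (ModalFormula.box φ)

/-- Scheme K: □(φ → ψ) → (□φ → □ψ). -/
def AxK (χ : ModalFormula) : Prop :=
  ∃ φ ψ : ModalFormula,
    χ = ModalFormula.impl (ModalFormula.box (ModalFormula.impl φ ψ))
          (ModalFormula.impl (ModalFormula.box φ) (ModalFormula.box ψ))

/-- Scheme T: □φ → φ. -/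
def AxT (χ : ModalFormula) : Prop :=
  ∃ φ : ModalFormula, χ = ModalFormula.impl (ModalFormula.box φ) φ

/-- Scheme 4: □φ → □□φ. -/
def Ax4 (χ : ModalFormula) : Prop :=
  ∃ φ : ModalFormula,
    χ = ModalFormula.impl (ModalFormula.box φ) (ModalFormula.box (ModalFormula.box φ))

/-- Scheme .2: ◇□φ → □◇φ. -/
def AxDot2 (χ : ModalFormula) : Prop :=
  ∃ φ : ModalFormula,
    χ = ModalFormula.impl (ModalFormula.dia (ModalFormula.box φ))
          (ModalFormula.box (ModalFormula.dia φ))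

/-- Scheme .3: (◇φ ∧ ◇ψ) → ◇[(φ ∧ ◇ψ) ∨ (ψ ∧ ◇φ)]. -/
def AxDot3 (χ : ModalFormula) : Prop :=
  ∃ φ ψ : ModalFormula,
    χ = ModalFormula.impl
          (ModalFormula.conj (ModalFormula.dia φ) (ModalFormula.dia ψ))
          (ModalFormula.dia
            (ModalFormula.disj (ModalFormula.conj φ (ModalFormula.dia ψ))
              (ModalFormula.conj ψ (ModalFormula.dia φ))))

/-- Scheme 5: ◇□φ → φ. -/
def Ax5 (χ : ModalFormula) : Prop :=
  ∃ φ : ModalFormula,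
    χ = ModalFormula.impl (ModalFormula.dia (ModalFormula.box φ)) φ

/-- Axioms of S4: K + T + 4. -/
def S4Ax (χ : ModalFormula) : Prop := AxK χ ∨ AxT χ ∨ Ax4 χ

/-- Axioms of S4.2: S4 + .2. -/
def S42Ax (χ : ModalFormula) : Prop := S4Ax χ ∨ AxDot2 χ

/-- Axioms of S4.3: S4 + .3. -/
def S43Ax (χ : ModalFormula) : Prop := S4Ax χ ∨ AxDot3 χ

/-- Axioms of S5: S4 + 5. -/
def S5Ax (χ : ModalFormula) : Prop := S4Ax χ ∨ Ax5 χ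

/-! Soundness holds because the S5 axioms are valid on every frame whose relation is an
equivalence. For completeness, let `S` be the subformulas of an underivable `φ` and pick a
consistent signing `c₀` of `S` with `c₀ φ = false`. The worlds are the consistent signings of
`S` that agree with `c₀` on every boxed formula of `S`, all related to each other. In the box case
of the truth lemma, axioms 4 and 5 make the boxed part `B` of a signing `w` satisfy `B → □B`; so if
`w` refutes `□ψ`, then `B ∧ ¬ψ` is consistent, and extending it gives a world refuting `ψ`. -/

open ModalFormula

deriving instance DecidableEq for ModalFormula

namespace ModalFormula

def isBox : ModalFormula → Bool
  | box _ => true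
  | _ => false

def subformulas : ModalFormula → Finset ModalFormula
  | falsum => {falsum}
  | var n => {var n}
  | impl a b => insert (impl a b) (subformulas a ∪ subformulas b)
  | box a => insert (box a) (subformulas a)

theorem mem_subformulas_self (φ : ModalFormula) : φ ∈ subformulas φ := by
  cases φ <;> simp [subformulas]

def conjList : List ModalFormula → ModalFormula
  | [] => neg falsum
  | a :: L => conj a (conjList L)

def literal (b : Bool) (ψ : ModalFormula) : ModalFormula :=
  if b then ψ else neg ψ

noncomputable def charFormula (c : ModalFormula → Bool) (S : Finset ModalFormula) :
    ModalFormula :=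
  conjList (S.toList.map fun ψ => literal (c ψ) ψ)

end ModalFormula

structure IsBoolValuation (v : ModalFormula → Prop) : Prop where
  not_falsum : ¬ v falsum
  impl_iff : ∀ a b, v (impl a b) ↔ (v a → v b)

namespace IsBoolValuation

variable {v : ModalFormula → Prop}

theorem neg_iff (hv : IsBoolValuation v) (a : ModalFormula) : v (neg a) ↔ ¬ v a := by
  simp [neg, hv.impl_iff, hv.not_falsum]

theorem conj_iff (hv : IsBoolValuation v) (a b : ModalFormula) :
    v (conj a b) ↔ v a ∧ v b := by
  simp [conj, hv.neg_iff, hv.impl_iff]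

theorem conjList_iff (hv : IsBoolValuation v) (L : List ModalFormula) :
    v (conjList L) ↔ ∀ a ∈ L, v a := by
  induction L with
  | nil => simp [conjList, hv.neg_iff, hv.not_falsum]
  | cons a L ih => simp [conjList, hv.conj_iff, ih]

theorem literal_iff (hv : IsBoolValuation v) (b : Bool) (ψ : ModalFormula) :
    v (literal b ψ) ↔ (v ψ ↔ b = true) := by
  cases b <;> simp [literal, hv.neg_iff]

theorem charFormula_iff (hv : IsBoolValuation v) (c : ModalFormula → Bool)
    (S : Finset ModalFormula) : v (charFormula c S) ↔ ∀ ψ ∈ S, (v ψ ↔ c ψ = true) := by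
  simp [charFormula, hv.conjList_iff, hv.literal_iff]

end IsBoolValuation

section Propositional

variable {Ax : ModalFormula → Prop}

theorem Derivable.of_forall_valuation {φ : ModalFormula} (ds : List {a // Derivable Ax a})
    (h : ∀ v, IsBoolValuation v → (∀ d ∈ ds, v d.1) → v φ) : Derivable Ax φ := by
  induction ds generalizing φ with
  | nil => exact .taut φ fun v h₀ h₁ => h v ⟨h₀, h₁⟩ (by simp)
  | cons d ds ih =>
    refine .mp d.1 φ (ih fun v hv hds => ?_) d.2
    exact (hv.impl_iff _ φ).2 fun hd => h v hv (List.forall_mem_cons.2 ⟨hd, hds⟩)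

def Consistent (Ax : ModalFormula → Prop) (α : ModalFormula) : Prop :=
  ¬ Derivable Ax (neg α)

theorem consistent_neg_of_not_derivable {φ : ModalFormula} (h : ¬ Derivable Ax φ) :
    Consistent Ax (neg φ) := fun hφ =>
  h (.of_forall_valuation [⟨_, hφ⟩] fun v hv => by simp [hv.neg_iff])

theorem not_consistent_of_forall_valuation {α : ModalFormula}
    (h : ∀ v, IsBoolValuation v → ¬ v α) : ¬ Consistent Ax α := fun hα =>
  hα (.of_forall_valuation [] fun v hv _ => (hv.neg_iff α).2 (h v hv))

namespace Consistent

theorem mono {α β : ModalFormula} (h : Consistent Ax α)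
    (himp : ∀ v, IsBoolValuation v → v α → v β) : Consistent Ax β := fun hβ =>
  h (.of_forall_valuation [⟨_, hβ⟩] fun v hv => by
    simpa [hv.neg_iff] using mt (himp v hv))

theorem conj_of_derivable {α β : ModalFormula} (h : Consistent Ax α)
    (hβ : Derivable Ax β) : Consistent Ax (conj α β) := fun hαβ =>
  h (.of_forall_valuation [⟨_, hβ⟩, ⟨_, hαβ⟩] fun v hv => by
    simp only [List.forall_mem_cons, hv.neg_iff, hv.conj_iff]; tauto)

theorem eq_of_forall_valuation {α ψ : ModalFormula} {b b' : Bool} (h : Consistent Ax α)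
    (hb : ∀ v, IsBoolValuation v → v α → (v ψ ↔ b = true))
    (hb' : ∀ v, IsBoolValuation v → v α → (v ψ ↔ b' = true)) : b = b' := by
  by_contra hne
  refine not_consistent_of_forall_valuation (fun v hv hα => hne ?_) h
  have := (hb v hv hα).symm.trans (hb' v hv hα)
  cases b <;> cases b' <;> simp_all

theorem exists_literal {α : ModalFormula} (h : Consistent Ax α) (ψ : ModalFormula) :
    ∃ b, Consistent Ax (conj α (literal b ψ)) := by
  by_contra! hno
  refine h (.of_forall_valuation [⟨_, not_not.1 (hno true)⟩, ⟨_, not_not.1 (hno false)⟩]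
    fun v hv => ?_)
  simp only [List.forall_mem_cons, hv.neg_iff, hv.conj_iff, hv.literal_iff]
  tauto

theorem exists_charFormula {α : ModalFormula} (h : Consistent Ax α) (S : Finset ModalFormula) :
    ∃ c : ModalFormula → Bool, (∀ ψ ∉ S, c ψ = false) ∧
      Consistent Ax (conj α (charFormula c S)) := by
  induction S using Finset.induction_on with
  | empty =>
    refine ⟨fun _ => false, fun _ _ => rfl, h.mono fun v hv hα => ?_⟩
    simp [hv.conj_iff, hv.charFormula_iff, hα]
  | insert ψ S hψ ih =>
    obtain ⟨c, hc, hcons⟩ := ih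
    obtain ⟨b, hb⟩ := hcons.exists_literal ψ
    have hupd : ∀ θ ∈ S, Function.update c ψ b θ = c θ := fun θ hθ =>
      Function.update_of_ne (ne_of_mem_of_not_mem hθ hψ) _ _
    refine ⟨Function.update c ψ b, fun θ hθ => ?_, hb.mono fun v hv => ?_⟩
    · rw [Finset.mem_insert, not_or] at hθ
      rw [Function.update_of_ne hθ.1, hc θ hθ.2]
    · simp only [hv.conj_iff, hv.charFormula_iff, hv.literal_iff, Finset.forall_mem_insert,
        Function.update_self]
      intro ⟨⟨hα, hS⟩, hψv⟩
      exact ⟨hα, hψv, fun θ hθ => by rw [hupd θ hθ]; exact hS θ hθ⟩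

end Consistent

end Propositional

section Modal

variable {Ax : ModalFormula → Prop}

theorem Derivable.box_mono (hK : AxK ≤ Ax) {a b : ModalFormula}
    (h : Derivable Ax (impl a b)) : Derivable Ax (impl (box a) (box b)) :=
  .mp _ _ (.ax _ (hK _ ⟨a, b, rfl⟩)) (.nec _ h)

theorem derivable_box_imp_box_imp_box_conj (hK : AxK ≤ Ax) (a b : ModalFormula) :
    Derivable Ax (impl (box a) (impl (box b) (box (conj a b)))) := by
  have hpair : Derivable Ax (impl (box a) (box (impl b (conj a b)))) :=
    .box_mono hK (.of_forall_valuation [] fun v hv _ => by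
      simp only [hv.impl_iff, hv.conj_iff]; tauto)
  refine .of_forall_valuation [⟨_, hpair⟩, ⟨_, .ax _ (hK _ ⟨b, conj a b, rfl⟩)⟩] fun v hv => ?_
  simp only [List.forall_mem_cons, hv.impl_iff]
  tauto

theorem derivable_conjList_imp_box (hK : AxK ≤ Ax) {L : List ModalFormula}
    (hL : ∀ a ∈ L, Derivable Ax (impl a (box a))) :
    Derivable Ax (impl (conjList L) (box (conjList L))) := by
  induction L with
  | nil =>
    have htop : Derivable Ax (box (neg falsum)) :=
      .nec _ (.of_forall_valuation [] fun v hv _ => by simp [hv.neg_iff, hv.not_falsum])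
    exact .of_forall_valuation [⟨_, htop⟩] fun v hv => by
      simp only [conjList, List.forall_mem_cons, hv.impl_iff]; tauto
  | cons a L ih =>
    simp only [List.forall_mem_cons] at hL
    refine .of_forall_valuation [⟨_, hL.1⟩, ⟨_, ih hL.2⟩,
      ⟨_, derivable_box_imp_box_imp_box_conj hK a (conjList L)⟩] fun v hv => ?_
    simp only [conjList, List.forall_mem_cons, hv.impl_iff, hv.conj_iff]
    tauto

theorem derivable_neg_box_imp_box_neg_box (hK : AxK ≤ Ax) (h4 : Ax4 ≤ Ax) (h5 : Ax5 ≤ Ax)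
    (a : ModalFormula) : Derivable Ax (impl (neg (box a)) (box (neg (box a)))) := by
  have h5' : Derivable Ax (impl (dia (box (box a))) (box a)) := .ax _ (h5 _ ⟨box a, rfl⟩)
  have h4' : Derivable Ax (impl (box (neg (box (box a)))) (box (neg (box a)))) :=
    .box_mono hK (.of_forall_valuation [⟨_, .ax _ (h4 _ ⟨a, rfl⟩)⟩] fun v hv => by
      simp only [List.forall_mem_cons, hv.impl_iff, hv.neg_iff]; tauto)
  refine .of_forall_valuation [⟨_, h5'⟩, ⟨_, h4'⟩] fun v hv => ?_
  simp only [dia, List.forall_mem_cons, hv.impl_iff, hv.neg_iff]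
  tauto

theorem derivable_charFormula_imp_box (hK : AxK ≤ Ax) (h4 : Ax4 ≤ Ax) (h5 : Ax5 ≤ Ax)
    (c : ModalFormula → Bool) {S : Finset ModalFormula} (hS : ∀ ψ ∈ S, ψ.isBox = true) :
    Derivable Ax (impl (charFormula c S) (box (charFormula c S))) := by
  refine derivable_conjList_imp_box hK fun a ha => ?_
  obtain ⟨ψ, hψ, rfl⟩ := List.mem_map.1 ha
  cases ψ with
  | box θ =>
    cases c (box θ)
    · exact derivable_neg_box_imp_box_neg_box hK h4 h5 θ
    · exact .ax _ (h4 _ ⟨θ, rfl⟩)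
  | _ => exact absurd (hS _ (Finset.mem_toList.1 hψ)) (by simp [isBox])

theorem Consistent.exists_charFormula_of_box_eq_false (hK : AxK ≤ Ax) (h4 : Ax4 ≤ Ax)
    (h5 : Ax5 ≤ Ax) {S : Finset ModalFormula} {w : ModalFormula → Bool} {ψ : ModalFormula}
    (hw : Consistent Ax (charFormula w S)) (hψ : ψ ∈ S) (hbψ : box ψ ∈ S)
    (hwψ : w (box ψ) = false) :
    ∃ c : ModalFormula → Bool, (∀ θ ∉ S, c θ = false) ∧ Consistent Ax (charFormula c S) ∧
      (∀ θ, box θ ∈ S → c (box θ) = w (box θ)) ∧ c ψ = false := by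
  have hB := derivable_charFormula_imp_box hK h4 h5 w (S := S.filter (·.isBox))
    fun θ hθ => (Finset.mem_filter.1 hθ).2
  set B := charFormula w (S.filter (·.isBox))
  have hBψ : Consistent Ax (conj B (neg ψ)) := by
    intro hBψ
    have hbox : Derivable Ax (impl (box B) (box ψ)) :=
      .box_mono hK (.of_forall_valuation [⟨_, hBψ⟩] fun v hv => by
        simp only [List.forall_mem_cons, hv.neg_iff, hv.conj_iff, hv.impl_iff]; tauto)
    refine hw (.of_forall_valuation [⟨_, hB⟩, ⟨_, hbox⟩] fun v hv => ?_)
    simp only [B, List.forall_mem_cons, hv.impl_iff, hv.neg_iff, hv.charFormula_iff,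
      Finset.mem_filter]
    rintro ⟨hBB, hbox, -⟩ hwv
    have hnot : ¬ v (box ψ) := by simpa [hwψ] using hwv _ hbψ
    exact hnot (hbox (hBB fun θ hθ => hwv θ hθ.1))
  obtain ⟨c, hc, hcons⟩ := hBψ.exists_charFormula S
  refine ⟨c, hc, hcons.mono fun v hv h => ((hv.conj_iff _ _).1 h).2, fun θ hθ => ?_, ?_⟩
  · refine hcons.eq_of_forall_valuation (ψ := box θ) (fun v hv h => ?_) (fun v hv h => ?_)
    · simp only [hv.conj_iff, hv.charFormula_iff] at h
      exact h.2 _ hθ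
    · simp only [B, hv.conj_iff, hv.charFormula_iff, Finset.mem_filter] at h
      exact h.1.1 _ ⟨hθ, rfl⟩
  · refine hcons.eq_of_forall_valuation (ψ := ψ) (fun v hv h => ?_) (fun v hv h => ?_)
    · simp only [hv.conj_iff, hv.charFormula_iff] at h
      exact h.2 _ hψ
    · simp only [hv.conj_iff, hv.neg_iff] at h
      simpa using h.1.2

end Modal

section Signing

variable {Ax : ModalFormula → Prop} {S : Finset ModalFormula} {c : ModalFormula → Bool}

namespace Consistent

theorem charFormula_falsum (h : Consistent Ax (charFormula c S)) (hS : falsum ∈ S) :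
    c falsum = false :=
  h.eq_of_forall_valuation (ψ := falsum) (fun v hv hc => (hv.charFormula_iff c S).1 hc _ hS)
    fun v hv _ => by simp [hv.not_falsum]

theorem charFormula_impl (h : Consistent Ax (charFormula c S)) {p q : ModalFormula}
    (hpq : impl p q ∈ S) (hp : p ∈ S) (hq : q ∈ S) :
    c (impl p q) = true ↔ (c p = true → c q = true) := by
  have := h.eq_of_forall_valuation (ψ := impl p q) (b' := !c p || c q)
    (fun v hv hc => (hv.charFormula_iff c S).1 hc _ hpq) fun v hv hc => by
      rw [hv.charFormula_iff] at hc
      rw [hv.impl_iff, hc p hp, hc q hq]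
      cases c p <;> cases c q <;> simp
  rw [this]
  cases c p <;> cases c q <;> simp

theorem charFormula_of_box (hT : AxT ≤ Ax) (h : Consistent Ax (charFormula c S))
    {p : ModalFormula} (hbp : box p ∈ S) (hp : p ∈ S) (hc : c (box p) = true) : c p = true :=
  (h.conj_of_derivable (.ax _ (hT _ ⟨p, rfl⟩))).eq_of_forall_valuation (ψ := p)
    (fun v hv h' => (hv.charFormula_iff c S).1 ((hv.conj_iff _ _).1 h').1 _ hp)
    fun v hv h' => by
      rw [hv.conj_iff, hv.charFormula_iff, hv.impl_iff] at h'
      simpa using h'.2 ((h'.1 _ hbp).2 hc)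

end Consistent

end Signing

theorem axK_le_s5Ax : AxK ≤ S5Ax := fun _ h => Or.inl (Or.inl h)

theorem axT_le_s5Ax : AxT ≤ S5Ax := fun _ h => Or.inl (Or.inr (Or.inl h))

theorem ax4_le_s5Ax : Ax4 ≤ S5Ax := fun _ h => Or.inl (Or.inr (Or.inr h))

theorem ax5_le_s5Ax : Ax5 ≤ S5Ax := fun _ h => Or.inr h

/-- Worlds of the countermodel. Agreeing with `c₀` on all boxed formulas is what lets the universal
relation satisfy the truth lemma; vanishing outside `S` makes them finitely many. -/
@[ext]
structure ClusterAtom (S : Finset ModalFormula) (c₀ : ModalFormula → Bool) where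
  sign : ModalFormula → Bool
  sign_eq_false : ∀ ψ ∉ S, sign ψ = false
  consistent : Consistent S5Ax (charFormula sign S)
  sign_box : ∀ θ, box θ ∈ S → sign (box θ) = c₀ (box θ)

instance {S : Finset ModalFormula} {c₀ : ModalFormula → Bool} : Finite (ClusterAtom S c₀) :=
  Finite.of_injective (fun a (ψ : S) => a.sign ψ) fun a b hab => by
    ext ψ
    by_cases hψ : ψ ∈ S
    · exact congrFun hab ⟨ψ, hψ⟩
    · rw [a.sign_eq_false ψ hψ, b.sign_eq_false ψ hψ]

def clusterModel (S : Finset ModalFormula) (c₀ : ModalFormula → Bool) : KripkeModel :=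
  ⟨ClusterAtom S c₀, fun _ _ => True, fun a n => a.sign (var n) = true⟩

theorem clusterModel_truth_iff {S : Finset ModalFormula} {c₀ : ModalFormula → Bool}
    {ψ : ModalFormula} (hψ : subformulas ψ ⊆ S) (a : ClusterAtom S c₀) :
    (clusterModel S c₀).truth a ψ ↔ a.sign ψ = true := by
  induction ψ generalizing a with
  | falsum =>
    simp [KripkeModel.truth, a.consistent.charFormula_falsum (hψ (mem_subformulas_self _))]
  | var n => rfl
  | impl p q ihp ihq =>
    rw [subformulas, Finset.insert_subset_iff, Finset.union_subset_iff] at hψ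
    obtain ⟨hpq, hp, hq⟩ := hψ
    rw [a.consistent.charFormula_impl hpq (hp (mem_subformulas_self p))
      (hq (mem_subformulas_self q))]
    exact imp_congr (ihp hp a) (ihq hq a)
  | box p ih =>
    rw [subformulas, Finset.insert_subset_iff] at hψ
    obtain ⟨hbp, hp⟩ := hψ
    have hpS := hp (mem_subformulas_self p)
    show (∀ b : ClusterAtom S c₀, True → (clusterModel S c₀).truth b p) ↔ _
    simp only [true_implies, ih hp]
    constructor
    · intro hall
      by_contra hne
      obtain ⟨c, hc, hcons, hcbox, hcp⟩ :=
        a.consistent.exists_charFormula_of_box_eq_false axK_le_s5Ax ax4_le_s5Ax ax5_le_s5Ax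
          hpS hbp (by simpa using hne)
      simpa [hcp] using hall ⟨c, hc, hcons, fun θ hθ => (hcbox θ hθ).trans (a.sign_box θ hθ)⟩
    · intro hbox b
      refine b.consistent.charFormula_of_box axT_le_s5Ax hbp hpS ?_
      rw [b.sign_box p hbp, ← a.sign_box p hbp, hbox]

theorem exists_finite_universal_countermodel {φ : ModalFormula} (h : ¬ Derivable S5Ax φ) :
    ∃ (W : Type) (_ : Finite W) (V : W → ℕ → Prop) (w : W),
      ¬ KripkeModel.truth ⟨W, fun _ _ => True, V⟩ w φ := by
  obtain ⟨c₀, hc₀, hcons⟩ :=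
    (consistent_neg_of_not_derivable h).exists_charFormula (subformulas φ)
  have hφ : c₀ φ = false :=
    hcons.eq_of_forall_valuation (ψ := φ)
      (fun v hv h' => (hv.charFormula_iff _ _).1 ((hv.conj_iff _ _).1 h').2 _
        (mem_subformulas_self φ))
      fun v hv h' => by rw [hv.conj_iff, hv.neg_iff] at h'; simpa using h'.1
  let a : ClusterAtom (subformulas φ) c₀ :=
    ⟨c₀, hc₀, hcons.mono fun v hv h' => ((hv.conj_iff _ _).1 h').2, fun _ _ => rfl⟩
  refine ⟨ClusterAtom _ c₀, inferInstance, fun a n => a.sign (var n) = true, a, ?_⟩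
  change ¬ (clusterModel _ c₀).truth a φ
  simp [clusterModel_truth_iff subset_rfl a, a, hφ]

theorem Derivable.validOnFrame {Ax : ModalFormula → Prop} {W : Type} {R : W → W → Prop}
    (hAx : ∀ χ, Ax χ → ValidOnFrame W R χ) {φ : ModalFormula} (h : Derivable Ax φ) :
    ValidOnFrame W R φ := by
  induction h with
  | taut ψ hψ => exact fun V w => hψ (KripkeModel.truth ⟨W, R, V⟩ w) id fun _ _ => Iff.rfl
  | ax ψ hψ => exact hAx ψ hψ
  | mp _ _ _ _ ih₁ ih₂ => exact fun V w => ih₁ V w (ih₂ V w)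
  | nec _ _ ih => exact fun V _ v _ => ih V v

theorem validOnFrame_of_s5Ax {W : Type} {R : W → W → Prop} (hR : Equivalence R)
    {χ : ModalFormula} (h : S5Ax χ) : ValidOnFrame W R χ := by
  intro V w
  rcases h with (⟨a, b, rfl⟩ | ⟨a, rfl⟩ | ⟨a, rfl⟩) | ⟨a, rfl⟩
  · exact fun hab ha v hv => hab v hv (ha v hv)
  · exact fun ha => ha w (hR.refl w)
  · exact fun ha v hv u hu => ha u (hR.trans hv hu)
  · intro hd
    by_contra hna
    exact hd fun v hv hbox => hna (hbox w (hR.symm hv))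

/-- S5 is characterized by the class of finite single-cluster frames:
a modal formula is derivable in S5 iff it is valid on every frame consisting
of a finite nonempty set of worlds with the universal accessibility relation. -/
theorem S5_characterized_by_finite_single_clusters (φ : ModalFormula) :
    Derivable S5Ax φ ↔
      ∀ (W : Type) (R : W → W → Prop),
        Finite W → Nonempty W → (∀ w v : W, R w v) → ValidOnFrame W R φ := by
  refine ⟨fun h W R _ _ hR => h.validOnFrame fun χ hχ =>
    validOnFrame_of_s5Ax ⟨fun _ => hR _ _, fun _ => hR _ _, fun _ _ => hR _ _⟩ hχ, fun hφ => ?_⟩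
  by_contra hnd
  obtain ⟨W, hW, V, w, hw⟩ := exists_finite_universal_countermodel hnd
  exact hw (hφ W (fun _ _ => True) hW ⟨w⟩ (fun _ _ => trivial) V w)
end

section
/- For propositional variables p1, p2, p3, the formula Theta := (Diamond Box p1 and Diamond Box p2 and Diamond Box p3 and not Diamond[(p1 and p2) or (p1 and p3) or (p2 and p3)]) -> Diamond[Diamond Box p1 and Diamond Box p2 and not Diamond Box p3] fails on some reflexive transitive frame: there is a Kripke model whose frame is a four-element reflexive transitive frame consisting of a root that accesses itself and three pairwise inaccessible reflexive leaves, and a world of that model (the root) at which Theta is false. -/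
/-- The formula Θ := (◇□p₁ ∧ ◇□p₂ ∧ ◇□p₃ ∧ ¬◇[(p₁∧p₂) ∨ (p₁∧p₃) ∨ (p₂∧p₃)])
    → ◇[◇□p₁ ∧ ◇□p₂ ∧ ¬◇□p₃]. -/
def theta (p1 p2 p3 : ℕ) : ModalFormula :=
  ModalFormula.impl
    (ModalFormula.conj
      (ModalFormula.conj
        (ModalFormula.conj
          (ModalFormula.dia (ModalFormula.box (ModalFormula.var p1)))
          (ModalFormula.dia (ModalFormula.box (ModalFormula.var p2))))
        (ModalFormula.dia (ModalFormula.box (ModalFormula.var p3))))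
      (ModalFormula.neg (ModalFormula.dia
        (ModalFormula.disj
          (ModalFormula.disj
            (ModalFormula.conj (ModalFormula.var p1) (ModalFormula.var p2))
            (ModalFormula.conj (ModalFormula.var p1) (ModalFormula.var p3)))
          (ModalFormula.conj (ModalFormula.var p2) (ModalFormula.var p3))))))
    (ModalFormula.dia
      (ModalFormula.conj
        (ModalFormula.conj
          (ModalFormula.dia (ModalFormula.box (ModalFormula.var p1)))
          (ModalFormula.dia (ModalFormula.box (ModalFormula.var p2))))
        (ModalFormula.neg (ModalFormula.dia (ModalFormula.box (ModalFormula.var p3))))))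

section Aux
open ModalFormula

@[simp] lemma truth_neg (M : KripkeModel) (w : M.W) (φ : ModalFormula) :
    M.truth w (neg φ) ↔ ¬ M.truth w φ := Iff.rfl

@[simp] lemma truth_impl (M : KripkeModel) (w : M.W) (φ ψ : ModalFormula) :
    M.truth w (impl φ ψ) ↔ (M.truth w φ → M.truth w ψ) := Iff.rfl

@[simp] lemma truth_var (M : KripkeModel) (w : M.W) (n : ℕ) :
    M.truth w (var n) ↔ M.V w n := Iff.rfl

@[simp] lemma truth_box (M : KripkeModel) (w : M.W) (φ : ModalFormula) :
    M.truth w (box φ) ↔ ∀ v, M.R w v → M.truth v φ := Iff.rfl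

@[simp] lemma truth_conj (M : KripkeModel) (w : M.W) (φ ψ : ModalFormula) :
    M.truth w (conj φ ψ) ↔ M.truth w φ ∧ M.truth w ψ := by
  simp only [ModalFormula.conj, ModalFormula.neg, KripkeModel.truth]
  tauto

@[simp] lemma truth_disj (M : KripkeModel) (w : M.W) (φ ψ : ModalFormula) :
    M.truth w (disj φ ψ) ↔ M.truth w φ ∨ M.truth w ψ := by
  simp only [ModalFormula.disj, ModalFormula.neg, KripkeModel.truth]
  tauto

@[simp] lemma truth_dia (M : KripkeModel) (w : M.W) (φ : ModalFormula) :
    M.truth w (dia φ) ↔ ∃ v, M.R w v ∧ M.truth v φ := by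
  simp only [ModalFormula.dia, ModalFormula.neg, KripkeModel.truth]
  constructor
  · intro h
    by_contra hc
    push_neg at hc
    exact h fun v hv ht => hc v hv ht
  · rintro ⟨v, hv, ht⟩ h
    exact h v hv ht

end Aux

/-- The formula Θ fails at the root of a Kripke model whose frame is the
four-element reflexive transitive frame consisting of a root `0` that accesses
every world and three pairwise inaccessible reflexive leaves `1`, `2`, `3`. -/
theorem theta_fails_on_three_leaf_tree (p1 p2 p3 : ℕ)
    (h12 : p1 ≠ p2) (h13 : p1 ≠ p3) (h23 : p2 ≠ p3) :
    ∃ V : Fin 4 → ℕ → Prop,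
      ¬ KripkeModel.truth ⟨Fin 4, fun x y => x = 0 ∨ x = y, V⟩ (0 : Fin 4)
          (theta p1 p2 p3) := by
  classical
  refine ⟨fun w q => (w = 1 ∧ q = p1) ∨ (w = 2 ∧ q = p2) ∨ (w = 3 ∧ q = p3), ?_⟩
  simp only [theta, truth_impl, truth_conj, truth_dia, truth_box, truth_neg,
    truth_disj, truth_var]
  intro h
  have hcons := h ⟨⟨⟨⟨1, Or.inl (by trivial), by
        rintro t (ht | rfl)
        · exact absurd ht (by decide)
        · simp⟩,
      ⟨2, Or.inl (by trivial), by
        rintro t (ht | rfl)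
        · exact absurd ht (by decide)
        · simp⟩⟩,
      ⟨3, Or.inl (by trivial), by
        rintro t (ht | rfl)
        · exact absurd ht (by decide)
        · simp⟩⟩, by
      rintro ⟨t, -, (⟨ha, hb⟩ | ⟨ha, hb⟩) | ⟨ha, hb⟩⟩ <;>
        rcases ha with ⟨rfl, ha2⟩ | ⟨rfl, ha2⟩ | ⟨rfl, ha2⟩ <;>
        rcases hb with ⟨hb1, hb2⟩ | ⟨hb1, hb2⟩ | ⟨hb1, hb2⟩ <;>
        first
          | exact absurd hb1 (by decide)
          | omega⟩
  obtain ⟨v, -, ⟨hv1, hv2⟩, hv3⟩ := hcons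
  fin_cases v
  · -- root: ◇□p3 holds, contradicting hv3
    refine hv3 ⟨3, Or.inl (by trivial), ?_⟩
    rintro t (ht | rfl)
    · exact absurd ht (by decide)
    · simp
  · -- leaf 1: ◇□p2 fails
    obtain ⟨u, hu, hbox⟩ := hv2
    rcases hu with hu | rfl
    · exact absurd hu (by decide)
    · rcases hbox 1 (Or.inr (by trivial)) with ⟨-, e⟩ | ⟨e, -⟩ | ⟨e, -⟩
      · exact h12 e.symm
      · exact absurd e (by decide)
      · exact absurd e (by decide)
  · -- leaf 2: ◇□p1 fails
    obtain ⟨u, hu, hbox⟩ := hv1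
    rcases hu with hu | rfl
    · exact absurd hu (by decide)
    · rcases hbox 2 (Or.inr (by trivial)) with ⟨e, -⟩ | ⟨-, e⟩ | ⟨e, -⟩
      · exact absurd e (by decide)
      · exact h12 e
      · exact absurd e (by decide)
  · -- leaf 3: ◇□p1 fails
    obtain ⟨u, hu, hbox⟩ := hv1
    rcases hu with hu | rfl
    · exact absurd hu (by decide)
    · rcases hbox 3 (Or.inr (by trivial)) with ⟨e, -⟩ | ⟨e, -⟩ | ⟨-, e⟩
      · exact absurd e (by decide)
      · exact absurd e (by decide)
      · exact h13 e
end
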